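/- arXiv:1401.1980 — 4 statements merged into one kernel-verified Lean document; each statement's English description precedes it below -/
import Mathlib

section
/- The quotient G/Z(G) is isomorphic to the semidirect product (ℤ/kℤ) ⋊ (ℤ/s'ℤ), where the generator of ℤ/s'ℤ acts on ℤ/kℤ by multiplication by r; equivalently, G/Z(G) is the split metacyclic group with presentation ⟨c, d | c^k = 1, d^{s'} = 1, d⁻¹cd = c^r⟩. -/
/-!
Write `ā, b̄` for the images of `a, b` in `G/Z(G)`; they still satisfy `b̄⁻¹ ā b̄ = ā ^ r`,
so `x ↦ ā ^ x` and `y ↦ b̄ ^ (-y)` combine to a homomorphism `(ℤ/kℤ) ⋊ (ℤ/s'ℤ) → G/Z(G)` as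
soon as `ā` has order `k` and `b̄` has order `s'`. As `G = ⟨a, b⟩`, an element is central iff it
commutes with `a` and `b`. Now `b⁻¹ a^i b = a^i (a^(r-1))^i`, so `a^i` is central iff
`(a^(r-1))^i = 1`, and `a^(r-1)` has order `m / gcd(r-1, m) = k`; likewise
`(b^j)⁻¹ a b^j = a^(r^j)`, so `b^j` is central iff `r^j ≡ 1 (mod m)`, i.e. iff `s' ∣ j`.
The map is onto because `ā, b̄` generate `G/Z(G)`, and one-to-one because `a^i b^j` can only
be central when `a^i` is.
-/

open Subgroup

section ZModPow

variable {Q : Type*} [Group Q]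

noncomputable def zmodPowHom (g : Q) : Multiplicative (ZMod (orderOf g)) →* Q :=
  AddMonoidHom.toMultiplicativeLeft <| ZMod.lift _
    ⟨zmultiplesHom _ (Additive.ofMul g), by simp [← ofMul_pow, pow_orderOf_eq_one]⟩

@[simp]
theorem zmodPowHom_ofAdd_intCast (g : Q) (i : ℤ) :
    zmodPowHom g (Multiplicative.ofAdd (i : ZMod (orderOf g))) = g ^ i := by
  simp [zmodPowHom]

@[simp]
theorem zmodPowHom_ofAdd_natCast (g : Q) (i : ℕ) :
    zmodPowHom g (Multiplicative.ofAdd (i : ZMod (orderOf g))) = g ^ i := by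
  exact_mod_cast zmodPowHom_ofAdd_intCast g i

theorem zmodPowHom_injective (g : Q) : Function.Injective (zmodPowHom g) := by
  refine (injective_iff_map_eq_one _).mpr fun x hx ↦ ?_
  obtain ⟨i, hi⟩ := ZMod.intCast_surjective x.toAdd
  rw [← ofAdd_toAdd x, ← hi, zmodPowHom_ofAdd_intCast, ← orderOf_dvd_iff_zpow_eq_one,
    ← ZMod.intCast_zmod_eq_zero_iff_dvd] at hx
  rw [← ofAdd_toAdd x, ← hi, hx, ofAdd_zero]

theorem range_zmodPowHom (g : Q) : (zmodPowHom g).range = zpowers g := by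
  ext x
  simp only [MonoidHom.mem_range, mem_zpowers_iff]
  constructor
  · rintro ⟨y, rfl⟩
    obtain ⟨i, hi⟩ := ZMod.intCast_surjective y.toAdd
    exact ⟨i, by rw [← zmodPowHom_ofAdd_intCast, hi, ofAdd_toAdd]⟩
  · rintro ⟨i, rfl⟩
    exact ⟨_, zmodPowHom_ofAdd_intCast g i⟩

end ZModPow

namespace SemidirectProduct

variable {N G H : Type*} [Group N] [Group G] [Group H] {φ : G →* MulAut N}
  {fn : N →* H} {fg : G →* H}
  {h : ∀ g, fn.comp (φ g).toMonoidHom = (MulAut.conj (fg g)).toMonoidHom.comp fn}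

theorem range_lift : (lift fn fg h).range = fn.range ⊔ fg.range := by
  refine le_antisymm ?_ (sup_le ?_ ?_)
  · rintro _ ⟨x, rfl⟩
    rw [← inl_left_mul_inr_right x, map_mul, lift_inl, lift_inr]
    exact mul_mem_sup ⟨_, rfl⟩ ⟨_, rfl⟩
  · rintro _ ⟨n, rfl⟩
    exact ⟨inl n, lift_inl _ _ _ n⟩
  · rintro _ ⟨g, rfl⟩
    exact ⟨inr g, lift_inr _ _ _ g⟩

theorem lift_injective (hn : Function.Injective fn) (hg : Function.Injective fg)
    (hdisj : Disjoint fn.range fg.range) : Function.Injective (lift fn fg h) := by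
  refine (injective_iff_map_eq_one _).mpr fun x hx ↦ ?_
  rw [← inl_left_mul_inr_right x, map_mul, lift_inl, lift_inr, mul_eq_one_iff_eq_inv] at hx
  have hleft : fn x.left = 1 :=
    disjoint_def.mp hdisj ⟨_, rfl⟩ (hx ▸ inv_mem ⟨_, rfl⟩)
  have hright : fg x.right = 1 := by rwa [hleft, eq_comm, inv_eq_one] at hx
  ext
  · exact (injective_iff_map_eq_one fn).mp hn _ hleft
  · exact (injective_iff_map_eq_one fg).mp hg _ hright

end SemidirectProduct

section TwoGenerated

variable {G : Type*} [Group G] {a b : G}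

theorem mem_center_iff_commute_of_closure_pair_eq_top (hgen : closure {a, b} = ⊤) {g : G} :
    g ∈ center G ↔ Commute g a ∧ Commute g b := by
  simp [center_eq_iInf hgen, mem_centralizer_singleton_iff, Commute, SemiconjBy,
    eq_comm (a := g * _)]

theorem zpow_mem_center_of_mul_zpow_mem_center (hgen : closure {a, b} = ⊤) {i j : ℤ}
    (h : a ^ i * b ^ j ∈ center G) : a ^ i ∈ center G := by
  rw [mem_center_iff_commute_of_closure_pair_eq_top hgen] at h ⊢
  refine ⟨(Commute.refl a).zpow_left i, ?_⟩
  simpa using h.2.mul_left ((Commute.refl b).zpow_left j).inv_left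

theorem disjoint_zpowers_mk_center (hgen : closure {a, b} = ⊤) :
    Disjoint (zpowers (a : G ⧸ center G)) (zpowers (b : G ⧸ center G)) := by
  rw [disjoint_def]
  rintro _ ⟨i, rfl⟩ ⟨j, hj : (b : G ⧸ center G) ^ j = (a : G ⧸ center G) ^ i⟩
  show (a : G ⧸ center G) ^ i = 1
  have : a ^ i * b ^ (-j) ∈ center G := by
    rw [← QuotientGroup.eq_one_iff]
    simp [hj]
  rw [← QuotientGroup.mk_zpow, QuotientGroup.eq_one_iff]
  exact zpow_mem_center_of_mul_zpow_mem_center hgen this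

theorem zpowers_mk_center_sup_eq_top (hgen : closure {a, b} = ⊤) :
    zpowers (a : G ⧸ center G) ⊔ zpowers (b : G ⧸ center G) = ⊤ := by
  rw [← map_top_of_surjective _ (QuotientGroup.mk'_surjective (center G)), ← hgen,
    MonoidHom.map_closure, Set.image_pair, ← Set.singleton_union, Subgroup.closure_union,
    ← zpowers_eq_closure, ← zpowers_eq_closure]
  rfl

end TwoGenerated

section Metacyclic

variable {G : Type*} [Group G] {a b : G} {r : ℕ}

theorem conj_pow_eq_pow_pow (hcon : b⁻¹ * a * b = a ^ r) (j : ℕ) :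
    (b ^ j)⁻¹ * a * b ^ j = a ^ r ^ j := by
  induction j with
  | zero => simp
  | succ j ih =>
    calc (b ^ (j + 1))⁻¹ * a * b ^ (j + 1) = b⁻¹ * ((b ^ j)⁻¹ * a * b ^ j) * b := by group
      _ = (b⁻¹ * a * b) ^ r ^ j := by
        rw [ih]; simpa using (conj_pow (a := b⁻¹) (b := a) (i := r ^ j)).symm
      _ = a ^ r ^ (j + 1) := by rw [hcon, ← pow_mul, pow_succ']

theorem zmodPowHom_comp_eq_conj_comp (hcon : b⁻¹ * a * b = a ^ r) [NeZero (orderOf b⁻¹)]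
    (φ : Multiplicative (ZMod (orderOf b⁻¹)) →* MulAut (Multiplicative (ZMod (orderOf a))))
    (hφ : ∀ (u : ZMod (orderOf b⁻¹)) (v : ZMod (orderOf a)),
      φ (.ofAdd u) (.ofAdd v) = .ofAdd ((r : ZMod (orderOf a)) ^ u.val * v))
    (g : Multiplicative (ZMod (orderOf b⁻¹))) :
    (zmodPowHom a).comp (φ g).toMonoidHom =
      (MulAut.conj (zmodPowHom b⁻¹ g)).toMonoidHom.comp (zmodPowHom a) := by
  refine MonoidHom.ext fun n ↦ ?_
  obtain ⟨i, hi⟩ := ZMod.intCast_surjective n.toAdd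
  have hb : zmodPowHom b⁻¹ g = (b ^ g.toAdd.val)⁻¹ := by
    rw [← inv_pow, ← zmodPowHom_ofAdd_natCast, ZMod.natCast_zmod_val, ofAdd_toAdd]
  have hn : zmodPowHom a n = a ^ i := by
    rw [← zmodPowHom_ofAdd_intCast, hi, ofAdd_toAdd]
  have hφn : φ g n = .ofAdd (((r ^ g.toAdd.val * i : ℤ) : ZMod (orderOf a))) := by
    rw [Int.cast_mul, Int.cast_pow, Int.cast_natCast, hi]
    exact hφ g.toAdd n.toAdd
  simp only [MonoidHom.comp_apply, MulEquiv.coe_toMonoidHom, MulAut.conj_apply, hb, inv_inv, hn,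
    hφn, zmodPowHom_ofAdd_intCast]
  have hconj := conj_zpow (a := (b ^ g.toAdd.val)⁻¹) (b := a) (i := i)
  rw [inv_inv] at hconj
  rw [← hconj, conj_pow_eq_pow_pow hcon, ← zpow_natCast, ← zpow_mul]
  push_cast
  rfl

theorem commute_pow_iff_pow_sub_one_pow_eq_one (hcon : b⁻¹ * a * b = a ^ r) (hr : 0 < r)
    (i : ℕ) : Commute (a ^ i) b ↔ (a ^ (r - 1)) ^ i = 1 := by
  have hconj : b⁻¹ * a ^ i * b = a ^ i * (a ^ (r - 1)) ^ i := by
    have := (conj_pow (a := b⁻¹) (b := a) (i := i)).symm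
    rw [inv_inv, hcon] at this
    rw [this, ← pow_mul, ← pow_mul, ← pow_add]
    congr 1
    obtain ⟨r, rfl⟩ : ∃ r', r = r' + 1 := ⟨r - 1, by omega⟩
    simp only [Nat.add_sub_cancel]
    ring
  rw [commute_iff_eq, ← inv_mul_eq_iff_eq_mul, ← mul_assoc, hconj, mul_eq_left]

theorem commute_pow_iff_natCast_pow_eq_one (hcon : b⁻¹ * a * b = a ^ r) (j : ℕ) :
    Commute (b ^ j) a ↔ (r : ZMod (orderOf a)) ^ j = 1 := by
  rw [commute_iff_eq, eq_comm, ← inv_mul_eq_iff_eq_mul, ← mul_assoc, conj_pow_eq_pow_pow hcon,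
    ← Nat.cast_pow, ← Nat.cast_one, ZMod.natCast_eq_natCast_iff, ← pow_eq_pow_iff_modEq, pow_one]

theorem orderOf_mk_center_eq_orderOf_pow_sub_one (hgen : closure {a, b} = ⊤)
    (hcon : b⁻¹ * a * b = a ^ r) (hr : 0 < r) :
    orderOf (a : G ⧸ center G) = orderOf (a ^ (r - 1)) := by
  refine orderOf_eq_orderOf_iff.mpr fun i ↦ ?_
  rw [← QuotientGroup.mk_pow, QuotientGroup.eq_one_iff,
    mem_center_iff_commute_of_closure_pair_eq_top hgen,
    commute_pow_iff_pow_sub_one_pow_eq_one hcon hr,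
    and_iff_right ((Commute.refl a).pow_left i)]

theorem orderOf_mk_center_eq_orderOf_natCast (hgen : closure {a, b} = ⊤)
    (hcon : b⁻¹ * a * b = a ^ r) :
    orderOf (b : G ⧸ center G) = orderOf (r : ZMod (orderOf a)) := by
  refine orderOf_eq_orderOf_iff.mpr fun j ↦ ?_
  rw [← QuotientGroup.mk_pow, QuotientGroup.eq_one_iff,
    mem_center_iff_commute_of_closure_pair_eq_top hgen, commute_pow_iff_natCast_pow_eq_one hcon,
    and_iff_left ((Commute.refl b).pow_left j)]

end Metacyclic

theorem quotient_center_iso_semidirect_general {G : Type*} [Group G] [Fintype G]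
    (m r : ℕ) (hr : 0 < r)
    (a b : G) (hgen : Subgroup.closure ({a, b} : Set G) = ⊤)
    (hcon : b⁻¹ * a * b = a ^ r)
    (horda : orderOf a = m)
    (k : ℕ) (hk : k = m / Nat.gcd (r - 1) m)
    (s' : ℕ) (hs' : s' = orderOf (r : ZMod m))
    (φ : Multiplicative (ZMod s') →* MulAut (Multiplicative (ZMod k)))
    (hφ : ∀ (x : ZMod s') (y : ZMod k),
      φ (Multiplicative.ofAdd x) (Multiplicative.ofAdd y) =
        Multiplicative.ofAdd ((r : ZMod k) ^ x.val * y)) :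
    Nonempty ((G ⧸ Subgroup.center G) ≃*
      (Multiplicative (ZMod k) ⋊[φ] Multiplicative (ZMod s'))) := by
  subst horda
  obtain rfl : k = orderOf (a : G ⧸ center G) := by
    rw [hk, orderOf_mk_center_eq_orderOf_pow_sub_one hgen hcon hr, orderOf_pow, Nat.gcd_comm]
  obtain rfl : s' = orderOf (b : G ⧸ center G)⁻¹ := by
    rw [hs', orderOf_inv, orderOf_mk_center_eq_orderOf_natCast hgen hcon]
  have hconQ : (b : G ⧸ center G)⁻¹ * a * b = (a : G ⧸ center G) ^ r := by
    rw [← QuotientGroup.mk_pow, ← hcon]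
    rfl
  have : NeZero (orderOf (b : G ⧸ center G)⁻¹) := ⟨(orderOf_pos _).ne'⟩
  let F := SemidirectProduct.lift (zmodPowHom _) (zmodPowHom _)
    (zmodPowHom_comp_eq_conj_comp hconQ φ hφ)
  have hinj : Function.Injective F := by
    refine SemidirectProduct.lift_injective (zmodPowHom_injective _) (zmodPowHom_injective _) ?_
    rw [range_zmodPowHom, range_zmodPowHom, zpowers_inv]
    exact disjoint_zpowers_mk_center hgen
  have hsurj : F.range = ⊤ := by
    rw [SemidirectProduct.range_lift, range_zmodPowHom, range_zmodPowHom, zpowers_inv,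
      zpowers_mk_center_sup_eq_top hgen]
  exact ⟨(MulEquiv.ofBijective F ⟨hinj, MonoidHom.range_eq_top.mp hsurj⟩).symm⟩

/-- The quotient `G/Z(G)` of the metacyclic group
`G = ⟨a, b | a^m = 1, b^s = a^t, b⁻¹ab = a^r⟩` is isomorphic to the semidirect product
`(ℤ/kℤ) ⋊ (ℤ/s'ℤ)`, where the generator of `ℤ/s'ℤ` acts on `ℤ/kℤ` by multiplication by
`r` (so the class `x` acts by multiplication by `r^x`); here `k = m / gcd (r−1) m` and
`s'` is the multiplicative order of `r` mod `m`. -/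
theorem quotient_center_iso_semidirect {G : Type*} [Group G] [Fintype G]
    (m s t r : ℕ) (hm : 0 < m) (hs : 0 < s) (ht : 0 < t) (hr : 0 < r)
    (hrsm : r ^ s ≡ 1 [MOD m]) (hmt : m ∣ t * (r - 1))
    (a b : G) (hgen : Subgroup.closure ({a, b} : Set G) = ⊤)
    (ham : a ^ m = 1) (hba : b ^ s = a ^ t) (hcon : b⁻¹ * a * b = a ^ r)
    (horda : orderOf a = m)
    (hordb : ∀ j : ℕ, b ^ j ∈ Subgroup.zpowers a ↔ s ∣ j)
    (k : ℕ) (hk : k = m / Nat.gcd (r - 1) m)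
    (s' : ℕ) (hs' : s' = orderOf (r : ZMod m))
    (φ : Multiplicative (ZMod s') →* MulAut (Multiplicative (ZMod k)))
    (hφ : ∀ (x : ZMod s') (y : ZMod k),
      φ (Multiplicative.ofAdd x) (Multiplicative.ofAdd y) =
        Multiplicative.ofAdd ((r : ZMod k) ^ x.val * y)) :
    Nonempty ((G ⧸ Subgroup.center G) ≃*
      (Multiplicative (ZMod k) ⋊[φ] Multiplicative (ZMod s'))) :=
  quotient_center_iso_semidirect_general m r hr a b hgen hcon horda k hk s' hs' φ hφ
end

section
/- ⟨b⟩ ∩ G' = ⟨b^s⟩ if and only if gcd(m, r−1) divides t. -/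
/-!
The derived subgroup is `⟨a ^ (r - 1)⟩`. It contains `⁅a⁻¹, b⁻¹⁆ = a ^ (r - 1)`; conversely this
cyclic subgroup is normal, because conjugation by `a` or `b` sends `a ^ (r - 1)` to a power of
itself and hence maps the finite group `⟨a ^ (r - 1)⟩` onto itself, and modulo it the generators
commute. Since `⟨b⟩ ∩ ⟨a⟩ = ⟨b ^ s⟩`, the intersection `⟨b⟩ ∩ G'` is `⟨b ^ s⟩` exactly when
`b ^ s = a ^ t` lies in `⟨a ^ (r - 1)⟩`, that is, when `gcd m (r - 1) ∣ t`.
-/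

open Subgroup
open scoped commutatorElement

section

variable {G : Type*} [Group G]

theorem inv_mul_pow_mul_eq_pow_pow {a b : G} {r : ℕ} (hcon : b⁻¹ * a * b = a ^ r)
    (n : ℕ) : b⁻¹ * a ^ n * b = (a ^ n) ^ r := by
  have h := conj_pow (a := b⁻¹) (b := a) (i := n)
  rw [inv_inv, hcon] at h
  rw [← h, ← pow_mul, ← pow_mul, mul_comm]

theorem mem_normalizer_zpowers_of_inv_mul_mul_eq_pow {x g : G} (hx : IsOfFinOrder x) {k : ℕ}
    (h : g⁻¹ * x * g = x ^ k) : g ∈ normalizer (zpowers x : Set G) := by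
  have : Finite (zpowers x) := hx.finite_zpowers.to_subtype
  refine inv_mem_iff.mp (mem_normalizer_iff_map_conj_eq.mpr ?_)
  refine eq_of_le_of_card_ge ?_ (card_map_of_injective (MulAut.conj g⁻¹).injective).ge
  rw [MonoidHom.map_zpowers, zpowers_le, MonoidHom.coe_coe, MulAut.conj_apply, inv_inv, h]
  exact pow_mem (mem_zpowers x) k

theorem commutator_le_of_closure_pair_eq_top {N : Subgroup G} [N.Normal] {x y : G}
    (hgen : closure {x, y} = ⊤) (hxy : ⁅x⁻¹, y⁻¹⁆ ∈ N) : commutator G ≤ N := by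
  set f := QuotientGroup.mk' N
  have hQ : closure {f x, f y} = ⊤ := by
    rw [← Set.image_pair, ← MonoidHom.map_closure, hgen,
      map_top_of_surjective f (QuotientGroup.mk'_surjective N)]
  have hfxy : f x * f y = f y * f x := by
    rw [eq_comm, QuotientGroup.mk'_apply, QuotientGroup.mk'_apply, ← QuotientGroup.mk_mul,
      ← QuotientGroup.mk_mul, QuotientGroup.eq]
    simpa [commutatorElement_def, mul_assoc] using hxy
  have hcomm : ∀ u ∈ ({f x, f y} : Set (G ⧸ N)), ∀ v ∈ ({f x, f y} : Set (G ⧸ N)),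
      u * v = v * u := by
    rintro u (rfl | rfl) v (rfl | rfl) <;> first | rfl | exact hfxy | exact hfxy.symm
  have hcc := closure_le_centralizer_centralizer ({f x, f y} : Set (G ⧸ N))
  refine Normal.quotient_commutative_iff_commutator_le.mp ⟨⟨fun u v ↦ ?_⟩⟩
  exact Set.centralizer_centralizer_comm_of_comm hcomm u (hcc (hQ ▸ mem_top u))
    v (hcc (hQ ▸ mem_top v))

theorem commutator_eq_zpowers_pow_sub_one {a b : G} {r : ℕ} (ha : IsOfFinOrder a) (hr : 0 < r)
    (hgen : closure {a, b} = ⊤) (hcon : b⁻¹ * a * b = a ^ r) :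
    commutator G = zpowers (a ^ (r - 1)) := by
  have hab : ⁅a⁻¹, b⁻¹⁆ = a ^ (r - 1) := by
    calc ⁅a⁻¹, b⁻¹⁆ = a⁻¹ * (b⁻¹ * a * b) := by group
      _ = a ^ (r - 1) := by rw [hcon, inv_mul_eq_iff_eq_mul, ← pow_succ', Nat.sub_add_cancel hr]
  have : (zpowers (a ^ (r - 1))).Normal := by
    rw [← normalizer_eq_top_iff, ← top_le_iff, ← hgen, closure_le]
    rintro _ (rfl | rfl)
    · exact mem_normalizer_zpowers_of_inv_mul_mul_eq_pow ha.pow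
        (inv_mul_pow_mul_eq_pow_pow (r := 1) (by group) _)
    · exact mem_normalizer_zpowers_of_inv_mul_mul_eq_pow ha.pow
        (inv_mul_pow_mul_eq_pow_pow hcon _)
  refine le_antisymm (commutator_le_of_closure_pair_eq_top hgen (hab ▸ mem_zpowers _)) ?_
  rw [zpowers_le, ← hab, commutator_eq_closure]
  exact subset_closure (commutator_mem_commutatorSet _ _)

theorem zpowers_inf_eq_zpowers_pow_iff {H : Subgroup G} {a b : G} {s : ℕ}
    (hH : H ≤ zpowers a) (hb : ∀ j : ℕ, b ^ j ∈ zpowers a ↔ s ∣ j) :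
    zpowers b ⊓ H = zpowers (b ^ s) ↔ b ^ s ∈ H := by
  refine ⟨fun h ↦ (h ▸ mem_zpowers (b ^ s)).2, fun hs ↦ le_antisymm ?_ ?_⟩
  · rintro _ ⟨⟨n, rfl⟩, hn⟩
    have hsn : (s : ℤ) ∣ n := by
      rw [Int.natCast_dvd, ← hb]
      rcases Int.natAbs_eq n with h | h <;> rw [h] at hn
      · simpa only [zpow_natCast] using hH hn
      · simpa only [zpow_neg, zpow_natCast, inv_mem_iff] using hH hn
    obtain ⟨k, rfl⟩ := hsn
    exact ⟨k, by simp [zpow_mul]⟩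
  · exact le_inf (zpowers_le.mpr (pow_mem (mem_zpowers b) s)) (zpowers_le.mpr hs)

theorem pow_mem_zpowers_pow_iff {a : G} {e t : ℕ} :
    a ^ t ∈ zpowers (a ^ e) ↔ Nat.gcd (orderOf a) e ∣ t := by
  rw [← Int.gcd_natCast_natCast, Int.gcd_dvd_iff, mem_zpowers_iff]
  constructor
  · rintro ⟨k, hk⟩
    obtain ⟨x, hx⟩ : (orderOf a : ℤ) ∣ t - e * k := by
      rw [orderOf_dvd_iff_zpow_eq_one, zpow_sub, zpow_mul, zpow_natCast, zpow_natCast, hk,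
        mul_inv_cancel]
    exact ⟨x, k, by linarith⟩
  · rintro ⟨x, y, h⟩
    refine ⟨y, ?_⟩
    rw [← zpow_natCast a t, h, zpow_add, zpow_mul, zpow_natCast, pow_orderOf_eq_one, one_zpow,
      one_mul, zpow_mul, zpow_natCast]

end

theorem zpowers_inf_commutator_iff_general {G : Type*} [Group G] [Fintype G]
    (m s t r : ℕ) (hr : 0 < r)
    (a b : G) (hgen : Subgroup.closure ({a, b} : Set G) = ⊤)
    (hba : b ^ s = a ^ t) (hcon : b⁻¹ * a * b = a ^ r)
    (horda : orderOf a = m)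
    (hordb : ∀ j : ℕ, b ^ j ∈ Subgroup.zpowers a ↔ s ∣ j) :
    Subgroup.zpowers b ⊓ commutator G = Subgroup.zpowers (b ^ s) ↔
      Nat.gcd m (r - 1) ∣ t := by
  rw [commutator_eq_zpowers_pow_sub_one (isOfFinOrder_of_finite a) hr hgen hcon,
    zpowers_inf_eq_zpowers_pow_iff (zpowers_le.mpr (pow_mem (mem_zpowers a) _)) hordb, hba,
    pow_mem_zpowers_pow_iff, horda]

/-- In the metacyclic group `G = ⟨a, b | a^m = 1, b^s = a^t, b⁻¹ab = a^r⟩`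
one has `⟨b⟩ ∩ G' = ⟨b^s⟩` if and only if `gcd m (r−1) ∣ t`. -/
theorem zpowers_inf_commutator_iff {G : Type*} [Group G] [Fintype G]
    (m s t r : ℕ) (hm : 0 < m) (hs : 0 < s) (ht : 0 < t) (hr : 0 < r)
    (hrsm : r ^ s ≡ 1 [MOD m]) (hmt : m ∣ t * (r - 1))
    (a b : G) (hgen : Subgroup.closure ({a, b} : Set G) = ⊤)
    (ham : a ^ m = 1) (hba : b ^ s = a ^ t) (hcon : b⁻¹ * a * b = a ^ r)
    (horda : orderOf a = m)
    (hordb : ∀ j : ℕ, b ^ j ∈ Subgroup.zpowers a ↔ s ∣ j) :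
    Subgroup.zpowers b ⊓ commutator G = Subgroup.zpowers (b ^ s) ↔
      Nat.gcd m (r - 1) ∣ t :=
  zpowers_inf_commutator_iff_general m s t r hr a b hgen hba hcon horda hordb
end

section
/- The subgroup ⟨a⟩ is regular: the commutator subgroup [⟨a⟩, N_G(⟨a⟩)] equals ⟨a⟩ ∩ G' (indeed N_G(⟨a⟩) = G, G' ⊆ ⟨a⟩, and [⟨a⟩, G] = G'). -/
/-! Conjugation by `b⁻¹` maps `⟨a⟩` into itself, hence onto itself as `G` is finite, so `⟨a⟩`
is normalized by both generators and is normal. Modulo any normal subgroup containing `⁅a, b⁆`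
the two generators commute, so the quotient is abelian; applied to `⁅⟨a⟩, G⁆ ≤ ⟨a⟩` this gives
`G' = ⁅⟨a⟩, G⁆ ≤ ⟨a⟩`. -/

open scoped commutatorElement

namespace Subgroup

variable {G : Type*} [Group G]

theorem commutator_le_of_closure_pair_eq_top {a b : G} (hgen : closure {a, b} = ⊤)
    {N : Subgroup G} [N.Normal] (hab : ⁅a, b⁆ ∈ N) : _root_.commutator G ≤ N := by
  rw [← Normal.quotient_commutative_iff_commutator_le]
  set π := QuotientGroup.mk' N
  have hcomm : π a * π b = π b * π a := by
    rw [← commutatorElement_eq_one_iff_mul_comm, ← map_commutatorElement]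
    exact (QuotientGroup.eq_one_iff _).mpr hab
  have hgen' : closure {π a, π b} = ⊤ := by
    rw [← Set.image_pair, ← MonoidHom.map_closure, hgen, ← MonoidHom.range_eq_map,
      MonoidHom.range_eq_top]
    exact QuotientGroup.mk'_surjective N
  have hclosure := isMulCommutative_closure (k := {π a, π b}) (by
    rintro x (rfl | rfl) y (rfl | rfl) <;> first | rfl | exact hcomm | exact hcomm.symm)
  exact Function.Surjective.mul_comm (f := ((closure {π a, π b}).subtype : _ →ₙ* G ⧸ N))
    (fun x ↦ ⟨⟨x, hgen' ▸ mem_top x⟩, rfl⟩) hclosure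

theorem commutator_top_eq_commutator {a b : G} (hgen : closure {a, b} = ⊤)
    {H : Subgroup G} [H.Normal] (ha : a ∈ H) : ⁅H, ⊤⁆ = _root_.commutator G :=
  le_antisymm (commutator_mono le_top le_top)
    (commutator_le_of_closure_pair_eq_top hgen (commutator_mem_commutator ha (mem_top b)))

theorem mem_normalizer_zpowers_of_conj_mem [Finite G] {a g : G}
    (h : g * a * g⁻¹ ∈ zpowers a) : g ∈ normalizer (zpowers a : Set G) :=
  mem_normalizer_fintype <| by
    rintro _ ⟨k, rfl⟩
    rw [← conj_zpow]
    exact zpow_mem h k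

theorem normalizer_zpowers_eq_top [Finite G] {a b : G} (hgen : closure {a, b} = ⊤)
    (hconj : b⁻¹ * a * b ∈ zpowers a) : normalizer (zpowers a : Set G) = ⊤ := by
  rw [eq_top_iff, ← hgen, closure_le]
  rintro x (rfl | rfl)
  · exact le_normalizer (mem_zpowers x)
  · have := mem_normalizer_zpowers_of_conj_mem (g := x⁻¹) (by rwa [inv_inv])
    exact inv_inv x ▸ inv_mem this

end Subgroup

theorem zpowers_a_regular_general {G : Type*} [Group G] [Fintype G]
    (r : ℕ) (a b : G) (hgen : Subgroup.closure ({a, b} : Set G) = ⊤)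
    (hcon : b⁻¹ * a * b = a ^ r) :
    ⁅Subgroup.zpowers a, Subgroup.normalizer (Subgroup.zpowers a : Set G)⁆ =
        Subgroup.zpowers a ⊓ commutator G ∧
      Subgroup.normalizer (Subgroup.zpowers a : Set G) = ⊤ ∧
      commutator G ≤ Subgroup.zpowers a ∧
      ⁅Subgroup.zpowers a, (⊤ : Subgroup G)⁆ = commutator G := by
  have hnorm :=
    Subgroup.normalizer_zpowers_eq_top hgen (hcon ▸ pow_mem (Subgroup.mem_zpowers a) r)
  have := Subgroup.normalizer_eq_top_iff.mp hnorm
  have htop := Subgroup.commutator_top_eq_commutator hgen (Subgroup.mem_zpowers a)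
  have hle : commutator G ≤ Subgroup.zpowers a := htop ▸ Subgroup.commutator_le_left _ _
  refine ⟨?_, hnorm, hle, htop⟩
  rw [hnorm, htop, inf_of_le_right hle]

/-- In the metacyclic group `G = ⟨a, b | a^m = 1, b^s = a^t, b⁻¹ab = a^r⟩`
the subgroup `⟨a⟩` is regular: `[⟨a⟩, N_G(⟨a⟩)] = ⟨a⟩ ∩ G'`; indeed `N_G(⟨a⟩) = G`,
`G' ⊆ ⟨a⟩` and `[⟨a⟩, G] = G'`. -/
theorem zpowers_a_regular {G : Type*} [Group G] [Fintype G]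
    (m s t r : ℕ) (hm : 0 < m) (hs : 0 < s) (ht : 0 < t) (hr : 0 < r)
    (hrsm : r ^ s ≡ 1 [MOD m]) (hmt : m ∣ t * (r - 1))
    (a b : G) (hgen : Subgroup.closure ({a, b} : Set G) = ⊤)
    (ham : a ^ m = 1) (hba : b ^ s = a ^ t) (hcon : b⁻¹ * a * b = a ^ r)
    (horda : orderOf a = m)
    (hordb : ∀ j : ℕ, b ^ j ∈ Subgroup.zpowers a ↔ s ∣ j) :
    ⁅Subgroup.zpowers a, Subgroup.normalizer (Subgroup.zpowers a : Set G)⁆ =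
        Subgroup.zpowers a ⊓ commutator G ∧
      Subgroup.normalizer (Subgroup.zpowers a : Set G) = ⊤ ∧
      commutator G ≤ Subgroup.zpowers a ∧
      ⁅Subgroup.zpowers a, (⊤ : Subgroup G)⁆ = commutator G :=
  zpowers_a_regular_general r a b hgen hcon
end

section
/- If gcd(m, r−1) divides t, then the subgroup ⟨b⟩ is regular: the commutator subgroup [⟨b⟩, N_G(⟨b⟩)] equals ⟨b⟩ ∩ G'. -/
/-!
Since `G / ⟨a⟩` is cyclic, `G' ≤ ⟨a⟩`, so an element `b ^ n` of `⟨b⟩ ∩ G'` has `s ∣ n` and is a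
power of `b ^ s = a ^ t`. The condition `gcd m (r - 1) ∣ t` provides `w` with
`(r - 1) w ≡ t (mod m)`, and then `⁅b⁻¹, a ^ w⁆ = a ^ ((r - 1) w) = b ^ s`, while `a ^ w`
conjugates `b` to `b ^ (s + 1)` and hence normalizes `⟨b⟩`. The other inclusion holds for every
subgroup.
-/

open scoped commutatorElement

open Subgroup

theorem Int.exists_mul_modEq_of_gcd_dvd {n a : ℤ} {c : ℕ} (h : n.gcd a ∣ c) :
    ∃ x : ℤ, a * x ≡ c [ZMOD n] := by
  obtain ⟨y, x, hc⟩ := Int.gcd_dvd_iff.mp h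
  exact ⟨x, Int.modEq_iff_dvd.mpr ⟨y, by rw [hc]; ring⟩⟩

section

variable {G : Type*} [Group G]

theorem Subgroup.mem_normalizer_zpowers_of_conj_mem_s14 [Finite G] {g x : G}
    (h : g * x * g⁻¹ ∈ zpowers x) : g ∈ normalizer (zpowers x : Set G) :=
  mem_normalizer_fintype fun _ ⟨k, hk⟩ => by
    rw [← hk, SetLike.mem_coe, ← conj_zpow]
    exact zpow_mem h k

theorem Subgroup.commutator_normalizer_le (H : Subgroup G) :
    ⁅H, normalizer (H : Set G)⁆ ≤ H :=
  commutator_le.mpr fun x hx y hy => by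
    rw [commutatorElement_def, mul_assoc, mul_assoc, ← mul_assoc y]
    exact mul_mem hx ((mem_normalizer_iff.mp hy _).mp (inv_mem hx))

theorem commutator_le_of_closure_pair_eq_top_s14 {N : Subgroup G} [N.Normal] {a b : G}
    (hgen : closure ({a, b} : Set G) = ⊤) (ha : a ∈ N) : commutator G ≤ N := by
  refine Normal.commutator_le_of_self_sup_commutative_eq_top (H := zpowers b) ?_ inferInstance
  rw [eq_top_iff, ← hgen, closure_le, Set.insert_subset_iff, Set.singleton_subset_iff]
  exact ⟨mem_sup_left ha, mem_sup_right (mem_zpowers b)⟩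

end

namespace Metacyclic

variable {G : Type*} [Group G] {a b : G} {r : ℕ}

theorem inv_mul_zpow_mul (hcon : b⁻¹ * a * b = a ^ r) (w : ℤ) :
    b⁻¹ * a ^ w * b = a ^ (r * w) := by
  rw [zpow_mul, zpow_natCast, ← hcon]
  simpa using (conj_zpow (a := b⁻¹)).symm

theorem zpowers_normal [Finite G] (hgen : closure ({a, b} : Set G) = ⊤)
    (hcon : b⁻¹ * a * b = a ^ r) : (zpowers a).Normal := by
  have hb : b⁻¹ ∈ normalizer (zpowers a : Set G) :=
    mem_normalizer_zpowers_of_conj_mem_s14 (by rw [inv_inv, hcon]; exact pow_mem (mem_zpowers a) r)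
  rw [← normalizer_eq_top_iff, eq_top_iff, ← hgen, closure_le, Set.insert_subset_iff,
    Set.singleton_subset_iff]
  exact ⟨le_normalizer (mem_zpowers a), by simpa using hb⟩

theorem exists_mem_normalizer_commutator_eq [Finite G] {m s t : ℕ} (hr : 0 < r)
    (hba : b ^ s = a ^ t) (hcon : b⁻¹ * a * b = a ^ r) (horda : orderOf a = m)
    (hdvd : Nat.gcd m (r - 1) ∣ t) :
    ∃ y ∈ normalizer (zpowers b : Set G), ⁅b⁻¹, y⁆ = b ^ s := by
  obtain ⟨w, hw⟩ := Int.exists_mul_modEq_of_gcd_dvd (n := m) (a := (r : ℤ) - 1) (c := t)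
    (by rwa [← Nat.cast_one, ← Nat.cast_sub hr, Int.gcd_natCast_natCast])
  have hcomm : ⁅b⁻¹, a ^ w⁆ = b ^ s := by
    rw [commutatorElement_def, inv_inv, inv_mul_zpow_mul hcon, ← zpow_neg, ← zpow_add, hba,
      ← zpow_natCast a t, zpow_eq_zpow_iff_modEq, horda]
    convert hw using 1
    ring
  refine ⟨a ^ w, mem_normalizer_zpowers_of_conj_mem_s14 ?_, hcomm⟩
  have hconj : a ^ w * b * (a ^ w)⁻¹ = b * ⁅b⁻¹, a ^ w⁆ := by group
  rw [hconj, hcomm, ← pow_succ']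
  exact pow_mem (mem_zpowers b) _

end Metacyclic

theorem zpowers_b_regular_general {G : Type*} [Group G] [Fintype G]
    (m s t r : ℕ) (hr : 0 < r)
    (a b : G) (hgen : Subgroup.closure ({a, b} : Set G) = ⊤)
    (hba : b ^ s = a ^ t) (hcon : b⁻¹ * a * b = a ^ r)
    (horda : orderOf a = m)
    (hordb : ∀ j : ℕ, b ^ j ∈ Subgroup.zpowers a ↔ s ∣ j)
    (hdvd : Nat.gcd m (r - 1) ∣ t) :
    ⁅Subgroup.zpowers b, Subgroup.normalizer (Subgroup.zpowers b : Set G)⁆ =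
      Subgroup.zpowers b ⊓ commutator G := by
  have := Metacyclic.zpowers_normal hgen hcon
  have hG' : commutator G ≤ zpowers a := commutator_le_of_closure_pair_eq_top_s14 hgen (mem_zpowers a)
  obtain ⟨y, hy, hyb⟩ := Metacyclic.exists_mem_normalizer_commutator_eq hr hba hcon horda hdvd
  refine le_antisymm (le_inf (commutator_normalizer_le _) (commutator_mono le_top le_top)) ?_
  rintro x ⟨hxb, hxG'⟩
  obtain ⟨n, rfl : b ^ n = x⟩ := mem_powers_iff_mem_zpowers.mpr hxb
  obtain ⟨k, rfl⟩ := (hordb n).mp (hG' hxG')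
  rw [pow_mul, ← hyb]
  exact pow_mem (commutator_mem_commutator (inv_mem (mem_zpowers b)) hy) k

/-- In the metacyclic group `G = ⟨a, b | a^m = 1, b^s = a^t, b⁻¹ab = a^r⟩`,
if `gcd m (r−1) ∣ t` then the subgroup `⟨b⟩` is regular: `[⟨b⟩, N_G(⟨b⟩)] = ⟨b⟩ ∩ G'`. -/
theorem zpowers_b_regular {G : Type*} [Group G] [Fintype G]
    (m s t r : ℕ) (hm : 0 < m) (hs : 0 < s) (ht : 0 < t) (hr : 0 < r)
    (hrsm : r ^ s ≡ 1 [MOD m]) (hmt : m ∣ t * (r - 1))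
    (a b : G) (hgen : Subgroup.closure ({a, b} : Set G) = ⊤)
    (ham : a ^ m = 1) (hba : b ^ s = a ^ t) (hcon : b⁻¹ * a * b = a ^ r)
    (horda : orderOf a = m)
    (hordb : ∀ j : ℕ, b ^ j ∈ Subgroup.zpowers a ↔ s ∣ j)
    (hdvd : Nat.gcd m (r - 1) ∣ t) :
    ⁅Subgroup.zpowers b, Subgroup.normalizer (Subgroup.zpowers b : Set G)⁆ =
      Subgroup.zpowers b ⊓ commutator G :=
  zpowers_b_regular_general m s t r hr a b hgen hba hcon horda hordb hdvd
end
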